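/- arXiv:1609.09519 — 6 statements merged into one kernel-verified Lean document; each statement's English description precedes it below -/
import Mathlib

section
/- For all integers n ≥ d ≥ 1, the set G(n,d) of good coefficient matrices is an open and dense subset of ℂ^{n×d} (with its standard topology as a finite-dimensional complex vector space). -/
open scoped BigOperators

/-- The set `G(n,d)` of *good coefficient matrices*: `C` is good if for every nonempty
set `Ψ` of permutations of `{1,…,d}` and every injection `φ : {1,…,d} ↪ {1,…,n}`,
the signed sum `∑_{π∈Ψ} sign(π) ∏_k C_{φ(k),π(k)}` is nonzero. -/
def Good {n d : ℕ} (C : Matrix (Fin n) (Fin d) ℂ) : Prop :=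
  ∀ Ψ : Finset (Equiv.Perm (Fin d)), Ψ.Nonempty → ∀ φ : Fin d ↪ Fin n,
    ∑ π ∈ Ψ, ((Equiv.Perm.sign π : ℤ) : ℂ) * ∏ k, C (φ k) (π k) ≠ 0

/-- Max-plus permanent of a rectangular real matrix (rows indexed by `κ`, columns by `ι`):
the maximum over injections `φ` of the columns into the rows of `∑ j, A (φ j) j`. -/
noncomputable def mpPerm {ι κ : Type*} [Fintype ι] [Fintype κ] (A : Matrix κ ι ℝ) : ℝ :=
  ⨆ φ : ι ↪ κ, ∑ j, A (φ j) j

/-- The `i`-obligated max-plus permanent: maximum over injections whose image contains `i`. -/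
noncomputable def mpPermOb {ι κ : Type*} [Fintype ι] [Fintype κ] (A : Matrix κ ι ℝ) (i : κ) : ℝ :=
  ⨆ φ : {φ : ι ↪ κ // ∃ j, φ j = i}, ∑ j, A (φ.1 j) j

/-- The set of optimal assignments of a max-plus matrix. -/
def oas {ι κ : Type*} [Fintype ι] [Fintype κ] (A : Matrix κ ι ℝ) : Set (ι ↪ κ) :=
  {φ | ∑ j, A (φ j) j = mpPerm A}

/-- The max-plus permanent of a square matrix with row `r` and column `c` deleted. -/
noncomputable def mpPermDel {d : ℕ} (M : Matrix (Fin d) (Fin d) ℝ) (r c : Fin d) : ℝ :=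
  mpPerm (M.submatrix (fun i : {i : Fin d // i ≠ r} => (i : Fin d))
                      (fun j : {j : Fin d // j ≠ c} => (j : Fin d)))

/-- The max-plus inverse of a square matrix:
`(M^{⊗-1})_{ij} = perm(M with row j and column i deleted) - perm(M)`. -/
noncomputable def mpInv {d : ℕ} (M : Matrix (Fin d) (Fin d) ℝ) : Matrix (Fin d) (Fin d) ℝ :=
  fun i j => mpPermDel M j i - mpPerm M

/-- Max-plus statistical leverage scores: `p_i(A) = 2 (perm(A,i) - perm(A))`. -/
noncomputable def mpScore {n d : ℕ} (A : Matrix (Fin n) (Fin d) ℝ) (i : Fin n) : ℝ :=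
  2 * (mpPermOb A i - mpPerm A)

/-- Statistical leverage scores of a complex matrix:
`p_i(A) = sup_{x, Ax ≠ 0} |(Ax)_i|² / ‖Ax‖₂²` (and `0` if the sup is over the empty set). -/
noncomputable def levScore {n d : ℕ} (A : Matrix (Fin n) (Fin d) ℂ) (i : Fin n) : ℝ :=
  sSup {t : ℝ | ∃ x : Fin d → ℂ, A.mulVec x ≠ 0 ∧
    t = ‖A.mulVec x i‖ ^ 2 / ∑ k, ‖A.mulVec x k‖ ^ 2}

/-! Each condition in `Good C` says that a polynomial in the entries of `C` does not vanish at `C`.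
None of these polynomials is zero, because distinct permutations contribute distinct monomials, so
the good matrices form the nonvanishing locus of their product: a nonzero polynomial. Such a locus
is open by continuity and dense because a nonzero polynomial vanishes at only finitely many points
of a line on which it is not identically zero. -/

open MvPolynomial Topology

namespace MvPolynomial

variable {σ K : Type*} [NontriviallyNormedField K]

noncomputable def restrictLine (p : MvPolynomial σ K) (x y : σ → K) : Polynomial K :=
  aeval (fun i => Polynomial.C (x i) + Polynomial.X * Polynomial.C (y i - x i)) p

theorem eval_restrictLine (p : MvPolynomial σ K) (x y : σ → K) (t : K) :
    (restrictLine p x y).eval t = eval (x + t • (y - x)) p := by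
  rw [restrictLine, ← Polynomial.coe_aeval_eq_eval, ← AlgHom.comp_apply, comp_aeval,
    aeval_eq_eval]
  congr 2
  funext i
  simp

theorem dense_setOf_eval_ne_zero {p : MvPolynomial σ K} (hp : p ≠ 0) :
    Dense {x | eval x p ≠ 0} := by
  obtain ⟨y, hy⟩ : ∃ y, eval y p ≠ 0 := by
    by_contra! h
    exact hp (funext fun x => by simp [h x])
  refine fun x => mem_closure_iff_nhds.2 fun U hU => ?_
  have hq : restrictLine p x y ≠ 0 := fun h =>
    hy (by simpa [h] using (eval_restrictLine p x y 1).symm)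
  have hline : (fun t : K => x + t • (y - x)) ⁻¹' U ∈ 𝓝 0 :=
    (by fun_prop : Continuous fun t : K => x + t • (y - x)).tendsto' 0 x (by simp) hU
  obtain ⟨t, htU, ht⟩ :=
    ((infinite_of_mem_nhds 0 hline).sdiff (Polynomial.finite_setOfPred_isRoot hq)).nonempty
  exact ⟨_, htU, by simpa [eval_restrictLine] using ht⟩

end MvPolynomial

section SignedPermSum

variable {R ι κ : Type*} [CommRing R] [Fintype ι] [DecidableEq ι]

noncomputable def signedPermSum (Ψ : Finset (Equiv.Perm ι)) (φ : ι ↪ κ) :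
    MvPolynomial (κ × ι) R :=
  ∑ π ∈ Ψ, C ((Equiv.Perm.sign π : ℤ) : R) * ∏ k, X (φ k, π k)

theorem eval_signedPermSum (Ψ : Finset (Equiv.Perm ι)) (φ : ι ↪ κ) (x : κ × ι → R) :
    eval x (signedPermSum Ψ φ) = ∑ π ∈ Ψ, ((Equiv.Perm.sign π : ℤ) : R) * ∏ k, x (φ k, π k) := by
  simp [signedPermSum]

noncomputable def graphExponent (φ : ι ↪ κ) (π : Equiv.Perm ι) : κ × ι →₀ ℕ :=
  ∑ k, Finsupp.single (φ k, π k) 1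

theorem graphExponent_apply (φ : ι ↪ κ) (π : Equiv.Perm ι) (j : ι) (c : ι) :
    graphExponent φ π (φ j, c) = if π j = c then 1 else 0 := by
  classical
  rw [graphExponent, Finsupp.finsetSum_apply, Finset.sum_eq_single j]
  · simp [Finsupp.single_apply]
  · intro k _ hkj
    simp [φ.injective.ne hkj]
  · simp

theorem graphExponent_injective (φ : ι ↪ κ) : Function.Injective (graphExponent φ) := by
  intro π π' h
  ext j
  have key := graphExponent_apply φ π' j (π j)
  rw [← h, graphExponent_apply, if_pos rfl] at key
  simpa [eq_comm] using key

theorem coeff_graphExponent_signedPermSum (Ψ : Finset (Equiv.Perm ι)) (φ : ι ↪ κ)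
    (π : Equiv.Perm ι) :
    coeff (graphExponent φ π) (signedPermSum Ψ φ : MvPolynomial (κ × ι) R) =
      if π ∈ Ψ then ((Equiv.Perm.sign π : ℤ) : R) else 0 := by
  classical
  have hmon : ∀ π' : Equiv.Perm ι, ∏ k, (X (φ k, π' k) : MvPolynomial (κ × ι) R) =
      monomial (graphExponent φ π') 1 := fun π' => by
    simp only [graphExponent, monomial_sum_one, X]
  simp only [signedPermSum, coeff_sum, coeff_C_mul, hmon, coeff_monomial,
    (graphExponent_injective φ).eq_iff, mul_ite, mul_one, mul_zero, Finset.sum_ite_eq']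

theorem signedPermSum_ne_zero [Nontrivial R] {Ψ : Finset (Equiv.Perm ι)} (hΨ : Ψ.Nonempty)
    (φ : ι ↪ κ) : (signedPermSum Ψ φ : MvPolynomial (κ × ι) R) ≠ 0 := by
  obtain ⟨π, hπ⟩ := hΨ
  intro h
  have hcoeff := coeff_graphExponent_signedPermSum (R := R) Ψ φ π
  rw [h, coeff_zero, if_pos hπ] at hcoeff
  rcases Int.units_eq_one_or (Equiv.Perm.sign π) with hs | hs <;> simp [hs] at hcoeff

variable (R ι κ) [Fintype κ]

noncomputable def goodPoly : MvPolynomial (κ × ι) R :=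
  ∏ Ψ : Finset (Equiv.Perm ι) with Ψ.Nonempty, ∏ φ : ι ↪ κ, signedPermSum Ψ φ

variable {R ι κ} [IsDomain R]

theorem eval_goodPoly_ne_zero_iff (x : κ × ι → R) :
    eval x (goodPoly R ι κ) ≠ 0 ↔ ∀ Ψ : Finset (Equiv.Perm ι), Ψ.Nonempty → ∀ φ : ι ↪ κ,
      ∑ π ∈ Ψ, ((Equiv.Perm.sign π : ℤ) : R) * ∏ k, x (φ k, π k) ≠ 0 := by
  simp [goodPoly, Finset.prod_ne_zero_iff, eval_signedPermSum]

theorem goodPoly_ne_zero : goodPoly R ι κ ≠ 0 := by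
  simp only [goodPoly, Finset.prod_ne_zero_iff, Finset.mem_filter]
  exact fun Ψ hΨ φ _ => signedPermSum_ne_zero hΨ.2 φ

end SignedPermSum

theorem good_iff_eval_goodPoly_ne_zero {n d : ℕ} (C : Matrix (Fin n) (Fin d) ℂ) :
    Good C ↔ eval (Function.uncurry C) (goodPoly ℂ (Fin d) (Fin n)) ≠ 0 := by
  rw [eval_goodPoly_ne_zero_iff]
  rfl

theorem good_isOpen_and_dense_general (n d : ℕ) :
    IsOpen {C : Matrix (Fin n) (Fin d) ℂ | Good C} ∧
      Dense {C : Matrix (Fin n) (Fin d) ℂ | Good C} := by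
  have hGood : {C : Matrix (Fin n) (Fin d) ℂ | Good C} =
      Homeomorph.piCurry.symm ⁻¹' {x | eval x (goodPoly ℂ (Fin d) (Fin n)) ≠ 0} :=
    Set.ext good_iff_eval_goodPoly_ne_zero
  rw [hGood]
  exact ⟨((continuous_eval _).isOpen_preimage _ isOpen_compl_singleton).preimage
      Homeomorph.piCurry.symm.continuous,
    (dense_setOf_eval_ne_zero goodPoly_ne_zero).preimage Homeomorph.piCurry.symm.isOpenMap⟩

/-- For all integers `n ≥ d ≥ 1`, the set `G(n,d)` of good coefficient
matrices is an open and dense subset of `ℂ^{n×d}`. -/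
theorem good_isOpen_and_dense (n d : ℕ) (hd : 1 ≤ d) (hdn : d ≤ n) :
    IsOpen {C : Matrix (Fin n) (Fin d) ℂ | Good C} ∧
      Dense {C : Matrix (Fin n) (Fin d) ℂ | Good C} :=
  good_isOpen_and_dense_general n d
end

section
/- Let n ≥ d ≥ 1 and C ∈ G(n,d). If C' = C([i_1,…,i_m],[j_1,…,j_ℓ]) is the m×ℓ submatrix of C formed from distinct rows i_1,…,i_m and distinct columns j_1,…,j_ℓ, with m ≥ ℓ, then C' ∈ G(m,ℓ). -/
/-!
Extend each permutation of the chosen columns to a permutation of all `d` columns fixing the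
others, and (as `d ≤ n`) extend the injection `φ` for the submatrix to an injection of all columns
of `C` into its rows. Each term of the signed sum for `C` along these extensions is then a common
product of entries, over the unchosen columns, times the corresponding term for the submatrix; so
that sum, nonzero as `C` is good, is a multiple of the signed sum for the submatrix.
-/

open scoped BigOperators

open Finset Equiv

theorem Function.Embedding.exists_extend_of_card_le {α β γ : Type*} [Fintype α] [Fintype β]
    (e : γ ↪ α) (f : γ ↪ β) (h : Fintype.card α ≤ Fintype.card β) :
    ∃ ψ : α ↪ β, ∀ x, ψ (e x) = f x := by
  classical
  obtain ⟨ι⟩ := Function.Embedding.nonempty_of_card_le h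
  let σ : Perm β :=
    ((ofInjective _ (e.trans ι).injective).symm.trans (ofInjective f f.injective)).extendSubtype
  refine ⟨ι.trans σ.toEmbedding, fun x => ?_⟩
  have hx : ι (e x) ∈ Set.range (e.trans ι) := ⟨x, rfl⟩
  simp only [Function.Embedding.trans_apply, Equiv.coe_toEmbedding, σ,
    extendSubtype_apply_of_mem _ _ hx]
  exact congrArg (fun y => (ofInjective f f.injective y : β))
    (ofInjective_symm_apply (e.trans ι).injective x)

theorem Equiv.Perm.sign_mul_prod_viaFintypeEmbedding {R α β γ : Type*} [CommRing R]
    [Fintype β] [Fintype γ] [DecidableEq β] [DecidableEq γ]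
    (C : Matrix α β R) (ψ : β → α) (c : γ ↪ β) (π : Perm γ) :
    ((sign (π.viaFintypeEmbedding c) : ℤ) : R) * ∏ j, C (ψ j) (π.viaFintypeEmbedding c j) =
      (∏ j ∈ (univ.map c)ᶜ, C (ψ j) j) * (((sign π : ℤ) : R) * ∏ k, C (ψ (c k)) (c (π k))) := by
  have fixed : ∀ j ∈ (univ.map c)ᶜ, C (ψ j) (π.viaFintypeEmbedding c j) = C (ψ j) j :=
    fun j hj => by rw [viaFintypeEmbedding_apply_notMem_range]; simpa using hj
  rw [viaFintypeEmbedding_sign, ← prod_compl_mul_prod (univ.map c), prod_congr rfl fixed,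
    prod_map]
  simp only [viaFintypeEmbedding_apply_image]
  ring

theorem good_submatrix_general (n d m l : ℕ) (hdn : d ≤ n)
    (C : Matrix (Fin n) (Fin d) ℂ) (hC : Good C)
    (r : Fin m ↪ Fin n) (c : Fin l ↪ Fin d) :
    Good (C.submatrix r c) := by
  intro Ψ hΨ φ
  obtain ⟨ψ, hψ⟩ := c.exists_extend_of_card_le (φ.trans r) (by simpa using hdn)
  have extend_injective : Function.Injective fun π : Perm (Fin l) => π.viaFintypeEmbedding c :=
    Perm.extendDomainHom_injective c.toEquivRange
  have hsum := hC (Ψ.map ⟨_, extend_injective⟩) hΨ.map ψ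
  simp only [sum_map, Function.Embedding.coeFn_mk, Perm.sign_mul_prod_viaFintypeEmbedding,
    ← mul_sum, hψ] at hsum
  exact right_ne_zero_of_mul hsum

/-- Any `m×ℓ` submatrix (on distinct rows and distinct columns, `m ≥ ℓ`)
of a good coefficient matrix is again a good coefficient matrix. -/
theorem good_submatrix (n d m l : ℕ) (hd : 1 ≤ d) (hdn : d ≤ n) (hlm : l ≤ m)
    (C : Matrix (Fin n) (Fin d) ℂ) (hC : Good C)
    (r : Fin m ↪ Fin n) (c : Fin l ↪ Fin d) :
    Good (C.submatrix r c) :=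
  good_submatrix_general n d m l hdn C hC r c
end

section
/- Let M̃ be a d×d matrix over the field K = HahnSeries ℚ ℂ with all entries nonzero, and suppose the matrix of leading coefficients L(M̃) lies in G(d,d). Then det(M̃) ≠ 0 and V(det(M̃)) = perm(V(M̃)), i.e. the valuation of the determinant equals the max-plus permanent max_{π∈Π(d)} ∑_{j=1}^{d} V(M̃)_{π(j),j} of the entrywise valuation matrix. -/
open scoped BigOperators

/-!
Expanding `det M̃ = ∑ σ sign σ ∏ⱼ M̃_{σ j, j}`, each term is a product of nonzero Hahn series,
so its order is `∑ⱼ order M̃_{σ j, j}` and its leading coefficient is `∏ⱼ L(M̃)_{σ j, j}`.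
Let `o` be the least of these orders. No term has a nonzero coefficient below `o`, and the
coefficient of `det M̃` at `o` is the signed sum of `∏ⱼ L(M̃)_{σ j, j}` over the permutations
attaining `o`, which the genericity condition `L(M̃) ∈ G(d,d)` makes nonzero. Hence
`order (det M̃) = o`, and `-o` is the max-plus permanent of `V(M̃)`.
-/

open Finset Equiv

namespace HahnSeries

variable {ι Γ R : Type*}

theorem order_sum_smul_eq [LinearOrder Γ] [Zero Γ] [Semiring R] {s : Finset ι} {c : ι → R}
    {f : ι → HahnSeries Γ R} {o : Γ} (hle : ∀ i ∈ s, o ≤ (f i).order)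
    (hlead : ∑ i ∈ s with (f i).order = o, c i * (f i).leadingCoeff ≠ 0) :
    (∑ i ∈ s, c i • f i) ≠ 0 ∧ (∑ i ∈ s, c i • f i).order = o := by
  have hbelow : ∀ g < o, (∑ i ∈ s, c i • f i).coeff g = 0 := fun g hg => by
    rw [coeff_sum]
    refine sum_eq_zero fun i hi => ?_
    rw [coeff_smul, coeff_eq_zero_of_lt_order (hg.trans_le (hle i hi)), smul_zero]
  have hat : (∑ i ∈ s, c i • f i).coeff o =
      ∑ i ∈ s with (f i).order = o, c i * (f i).leadingCoeff := by
    rw [coeff_sum, sum_filter]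
    refine sum_congr rfl fun i hi => ?_
    rw [coeff_smul, smul_eq_mul]
    split_ifs with h
    · rw [leadingCoeff_eq, h]
    · rw [coeff_eq_zero_of_lt_order ((hle i hi).lt_of_ne' h), mul_zero]
  rw [← hat] at hlead
  have hne := ne_zero_of_coeff_ne_zero hlead
  exact ⟨hne, (order_le_of_coeff_ne_zero hlead).antisymm ((le_order_iff_forall hne).2 hbelow)⟩

variable [AddCommMonoid Γ] [LinearOrder Γ] [IsOrderedCancelAddMonoid Γ]
  [CommSemiring R] [NoZeroDivisors R]

theorem leadingCoeff_prod (s : Finset ι) (f : ι → HahnSeries Γ R) :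
    (∏ i ∈ s, f i).leadingCoeff = ∏ i ∈ s, (f i).leadingCoeff := by
  induction s using Finset.cons_induction <;> simp_all

theorem order_prod [Nontrivial R] {s : Finset ι} {f : ι → HahnSeries Γ R}
    (hf : ∀ i ∈ s, f i ≠ 0) : (∏ i ∈ s, f i).order = ∑ i ∈ s, (f i).order := by
  induction s using Finset.cons_induction with
  | empty => simp
  | cons a s ha ih =>
    rw [forall_mem_cons] at hf
    rw [prod_cons, sum_cons, order_mul hf.1 (prod_ne_zero_iff.2 hf.2), ih hf.2]

end HahnSeries

theorem Matrix.det_ne_zero_and_order_det_eq {n Γ R : Type*} [Fintype n] [DecidableEq n]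
    [AddCommMonoid Γ] [LinearOrder Γ] [IsOrderedCancelAddMonoid Γ] [CommRing R] [IsDomain R]
    {M : Matrix n n (HahnSeries Γ R)} (h0 : ∀ i j, M i j ≠ 0) {o : Γ}
    (hle : ∀ σ : Perm n, o ≤ ∑ j, (M (σ j) j).order)
    (hlead : ∑ σ with ∑ j, (M (σ j) j).order = o,
      ((Perm.sign σ : ℤ) : R) * ∏ j, (M (σ j) j).leadingCoeff ≠ 0) :
    M.det ≠ 0 ∧ M.det.order = o := by
  have hdet : M.det = ∑ σ : Perm n, ((Perm.sign σ : ℤ) : R) • ∏ j, M (σ j) j := by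
    simp only [det_apply', Int.cast_smul_eq_zsmul, zsmul_eq_mul]
  have hord (σ : Perm n) : (∏ j, M (σ j) j).order = ∑ j, (M (σ j) j).order :=
    HahnSeries.order_prod fun j _ => h0 _ _
  rw [hdet]
  refine HahnSeries.order_sum_smul_eq (fun σ _ => hord σ ▸ hle σ) ?_
  simpa only [hord, HahnSeries.leadingCoeff_prod] using hlead

theorem Good.sum_sign_mul_prod_ne_zero {d : ℕ} {C : Matrix (Fin d) (Fin d) ℂ} (hC : Good C)
    {Ψ : Finset (Perm (Fin d))} (hΨ : Ψ.Nonempty) :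
    ∑ σ ∈ Ψ, ((Perm.sign σ : ℤ) : ℂ) * ∏ j, C (σ j) j ≠ 0 := by
  have h := hC (Ψ.map (Equiv.inv _).toEmbedding) hΨ.map (Function.Embedding.refl _)
  rw [sum_map] at h
  convert h using 2 with σ -
  simp only [toEmbedding_apply, inv_apply, Perm.sign_inv, Function.Embedding.refl_apply]
  congr 1
  exact Fintype.prod_equiv σ _ _ fun j => by simp

theorem mpPerm_eq_of_forall_le {ι κ : Type*} [Fintype ι] [Fintype κ] (A : Matrix κ ι ℝ)
    (φ₀ : ι ↪ κ) (h : ∀ φ : ι ↪ κ, ∑ j, A (φ j) j ≤ ∑ j, A (φ₀ j) j) :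
    mpPerm A = ∑ j, A (φ₀ j) j :=
  have : Nonempty (ι ↪ κ) := ⟨φ₀⟩
  (ciSup_le h).antisymm (le_ciSup ⟨_, Set.forall_mem_range.2 h⟩ φ₀)

theorem mpPerm_eq_of_forall_perm_le {ι : Type*} [Fintype ι] (A : Matrix ι ι ℝ) (σ₀ : Perm ι)
    (h : ∀ σ : Perm ι, ∑ j, A (σ j) j ≤ ∑ j, A (σ₀ j) j) :
    mpPerm A = ∑ j, A (σ₀ j) j :=
  mpPerm_eq_of_forall_le A σ₀.toEmbedding fun φ => h φ.equivOfFiniteSelfEmbedding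

theorem valuation_det_eq_mpPerm_general (d : ℕ)
    (M : Matrix (Fin d) (Fin d) (HahnSeries ℚ ℂ))
    (h0 : ∀ i j, M i j ≠ 0)
    (hG : Good (fun i j => (M i j).coeff (M i j).order)) :
    M.det ≠ 0 ∧
      ((-(HahnSeries.order M.det) : ℚ) : ℝ) =
        mpPerm (fun a b : Fin d => ((-(M a b).order : ℚ) : ℝ)) := by
  let ord (σ : Perm (Fin d)) : ℚ := ∑ j, (M (σ j) j).order
  obtain ⟨σ₀, -, hσ₀⟩ := exists_min_image univ ord univ_nonempty
  have hlead := hG.sum_sign_mul_prod_ne_zero (Ψ := {σ | ord σ = ord σ₀}) ⟨σ₀, by simp⟩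
  simp only [← HahnSeries.leadingCoeff_eq] at hlead
  obtain ⟨hdet, horder⟩ :=
    Matrix.det_ne_zero_and_order_det_eq h0 (fun σ => hσ₀ σ (mem_univ σ)) hlead
  refine ⟨hdet, ?_⟩
  have hval (σ : Perm (Fin d)) : ∑ j, ((-(M (σ j) j).order : ℚ) : ℝ) = ((-ord σ : ℚ) : ℝ) := by
    push_cast [ord]
    rw [sum_neg_distrib]
  rw [horder, mpPerm_eq_of_forall_perm_le (fun a b : Fin d => ((-(M a b).order : ℚ) : ℝ)) σ₀
    fun σ => ?_, hval]
  rw [hval, hval]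
  exact_mod_cast neg_le_neg (hσ₀ σ (mem_univ σ))

/-- For a square matrix `M̃` over the Hahn series field `K = HahnSeries ℚ ℂ`
with all entries nonzero and generic leading coefficients (`L(M̃) ∈ G(d,d)`),
the determinant is nonzero and its valuation `V(det M̃) = -order(det M̃)` equals the
max-plus permanent of the entrywise valuation matrix `V(M̃)`. -/
theorem valuation_det_eq_mpPerm (d : ℕ) (hd : 1 ≤ d)
    (M : Matrix (Fin d) (Fin d) (HahnSeries ℚ ℂ))
    (h0 : ∀ i j, M i j ≠ 0)
    (hG : Good (fun i j => (M i j).coeff (M i j).order)) :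
    M.det ≠ 0 ∧
      ((-(HahnSeries.order M.det) : ℚ) : ℝ) =
        mpPerm (fun a b : Fin d => ((-(M a b).order : ℚ) : ℝ)) :=
  valuation_det_eq_mpPerm_general d M h0 hG
end

section
/- Let 𝒜 be an n×d real matrix with n ≥ d ≥ 2, let φ ∈ oas(𝒜) be an optimal assignment of 𝒜, and let j ∈ {1,…,d}. Then perm(𝒜([1,…,n],[j]^c)) = perm(𝒜([φ(1),…,φ(d)],[j]^c)), i.e. the max-plus permanent of the n×(d−1) matrix obtained from 𝒜 by deleting column j equals the max-plus permanent of the d×(d−1) matrix formed from rows φ(1),…,φ(d) of 𝒜 with column j deleted. -/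
open scoped BigOperators

/-!
Write `s` for the columns other than `j` and let `ψ : s ↪ rows` be any assignment of the
reduced matrix. Call `c ∈ s` *exchangeable* if it lies on an alternating path
`ψ b, φ b = ψ c₁, φ c₁ = ψ c₂, …, φ cₖ₋₁ = ψ c` starting at a row `ψ b` outside the range of `φ`.
Giving the exchangeable columns their `φ`-rows and the others their `ψ`-rows yields an assignment
of `s` into the range of `φ`; the complementary swap yields a full assignment `g`. Both are
injective, and together they use every entry of `ψ` and of `φ` exactly once. Since `φ` is optimal,
`g` is no better than `φ`, so the first assignment is at least as good as `ψ`.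
-/

section MaxPlusPermanent

variable {ι κ : Type*} [Fintype ι] [Fintype κ]

theorem sum_le_mpPerm (A : Matrix κ ι ℝ) (ψ : ι ↪ κ) : ∑ c, A (ψ c) c ≤ mpPerm A :=
  le_ciSup (f := fun ψ : ι ↪ κ => ∑ c, A (ψ c) c) (Set.finite_range _).bddAbove ψ

theorem mpPerm_le [Nonempty (ι ↪ κ)] {A : Matrix κ ι ℝ} {b : ℝ}
    (h : ∀ ψ : ι ↪ κ, ∑ c, A (ψ c) c ≤ b) : mpPerm A ≤ b :=
  ciSup_le h

end MaxPlusPermanent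

section Exchange

variable {ι κ : Type*} {p : ι → Prop} (φ : ι ↪ κ) (ψ : {c // p c} ↪ κ)

def exchangeSet : Set {c // p c} :=
  {c | ∃ b, ψ b ∉ Set.range φ ∧ Relation.ReflTransGen (fun a b => ψ b = φ a) b c}

variable {φ ψ}

theorem mem_exchangeSet_of_notMem_range {c : {c // p c}} (hc : ψ c ∉ Set.range φ) :
    c ∈ exchangeSet φ ψ :=
  ⟨c, hc, .refl⟩

theorem mem_exchangeSet_of_eq {c c' : {c // p c}} (hc : c ∈ exchangeSet φ ψ)
    (h : ψ c' = φ c) : c' ∈ exchangeSet φ ψ := by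
  obtain ⟨b, hb, hbc⟩ := hc
  exact ⟨b, hb, hbc.tail h⟩

theorem exists_mem_exchangeSet_of_eq {c : {c // p c}} (hc : c ∈ exchangeSet φ ψ) {i : ι}
    (h : ψ c = φ i) : ∃ hi : p i, ⟨i, hi⟩ ∈ exchangeSet φ ψ := by
  obtain ⟨b, hb, hbc⟩ := hc
  rcases hbc.cases_tail with rfl | ⟨c', hbc', hc'⟩
  · exact absurd ⟨i, h.symm⟩ hb
  · obtain rfl : (c' : ι) = i := φ.injective (hc'.symm.trans h)
    exact ⟨c'.2, b, hb, hbc'⟩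

theorem exists_embedding_of_exchangeSet :
    ∃ χ : {c // p c} ↪ ι, ∀ c, (c ∈ exchangeSet φ ψ → χ c = c) ∧
      (c ∉ exchangeSet φ ψ → φ (χ c) = ψ c) := by
  classical
  have hrange : ∀ c, c ∉ exchangeSet φ ψ → ∃ i, φ i = ψ c := fun c hc =>
    not_not.mp (mt mem_exchangeSet_of_notMem_range hc)
  let χ : {c // p c} → ι := fun c => if hc : c ∈ exchangeSet φ ψ then c else (hrange c hc).choose
  have hχ : ∀ c, (c ∈ exchangeSet φ ψ → χ c = c) ∧ (c ∉ exchangeSet φ ψ → φ (χ c) = ψ c) :=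
    fun c => ⟨fun hc => dif_pos hc, fun hc => by simp only [χ, dif_neg hc, (hrange c hc).choose_spec]⟩
  refine ⟨⟨χ, fun x y hxy => ?_⟩, hχ⟩
  by_cases hx : x ∈ exchangeSet φ ψ <;> by_cases hy : y ∈ exchangeSet φ ψ
  · exact Subtype.ext (((hχ x).1 hx).symm.trans (hxy.trans ((hχ y).1 hy)))
  · refine absurd (mem_exchangeSet_of_eq hx ?_) hy
    rw [← (hχ y).2 hy, ← hxy, (hχ x).1 hx]
  · refine absurd (mem_exchangeSet_of_eq hy ?_) hx
    rw [← (hχ x).2 hx, hxy, (hχ y).1 hy]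
  · exact ψ.injective (((hχ x).2 hx).symm.trans ((congrArg φ hxy).trans ((hχ y).2 hy)))

theorem exists_embedding_swap_on_exchangeSet :
    ∃ g : ι ↪ κ, (∀ c : {c // p c}, (c ∈ exchangeSet φ ψ → g c = ψ c) ∧
      (c ∉ exchangeSet φ ψ → g c = φ c)) ∧ ∀ c, ¬ p c → g c = φ c := by
  classical
  let g : ι → κ := fun c =>
    if hc : ∃ h : p c, ⟨c, h⟩ ∈ exchangeSet φ ψ then ψ ⟨c, hc.1⟩ else φ c
  have hg : ∀ c : {c // p c}, (c ∈ exchangeSet φ ψ → g c = ψ c) ∧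
      (c ∉ exchangeSet φ ψ → g c = φ c) :=
    fun c => ⟨fun hc => dif_pos ⟨c.2, hc⟩, fun hc => dif_neg fun h => hc h.2⟩
  have hg_out : ∀ c, ¬ p c → g c = φ c := fun c hc => dif_neg fun h => hc h.1
  have hg_mixed : ∀ x y, (∃ h : p x, ⟨x, h⟩ ∈ exchangeSet φ ψ) →
      (¬ ∃ h : p y, ⟨y, h⟩ ∈ exchangeSet φ ψ) → g x ≠ g y := by
    rintro x y ⟨hpx, hx⟩ hy hxy
    rw [(hg ⟨x, hpx⟩).1 hx, show g y = φ y from dif_neg hy] at hxy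
    exact hy (exists_mem_exchangeSet_of_eq hx hxy)
  refine ⟨⟨g, fun x y hxy => ?_⟩, hg, hg_out⟩
  by_cases hx : ∃ h : p x, ⟨x, h⟩ ∈ exchangeSet φ ψ <;>
    by_cases hy : ∃ h : p y, ⟨y, h⟩ ∈ exchangeSet φ ψ
  · simp only [g, dif_pos hx, dif_pos hy] at hxy
    exact congrArg Subtype.val (ψ.injective hxy)
  · exact absurd hxy (hg_mixed x y hx hy)
  · exact absurd hxy.symm (hg_mixed y x hy hx)
  · simp only [g, dif_neg hx, dif_neg hy] at hxy
    exact φ.injective hxy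

end Exchange

theorem exists_sum_le_sum_comp_of_mem_oas {ι κ : Type*} [Fintype ι] [Fintype κ] {p : ι → Prop}
    [DecidablePred p] {A : Matrix κ ι ℝ} {φ : ι ↪ κ} (hφ : φ ∈ oas A) (ψ : {c // p c} ↪ κ) :
    ∃ χ : {c // p c} ↪ ι, ∑ c, A (ψ c) c ≤ ∑ c, A (φ (χ c)) c := by
  obtain ⟨χ, hχ⟩ := exists_embedding_of_exchangeSet (φ := φ) (ψ := ψ)
  obtain ⟨g, hg, hg_out⟩ := exists_embedding_swap_on_exchangeSet (φ := φ) (ψ := ψ)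
  have hswap : ∀ c : {c // p c}, A (φ (χ c)) c + A (g c) c = A (ψ c) c + A (φ c) c := by
    intro c
    by_cases hc : c ∈ exchangeSet φ ψ
    · rw [(hχ c).1 hc, (hg c).1 hc, add_comm]
    · rw [(hχ c).2 hc, (hg c).2 hc]
  have hg_le : ∑ c, A (g c) c ≤ ∑ c, A (φ c) c := hφ ▸ sum_le_mpPerm A g
  have hsum : ∑ c, A (φ (χ c)) c + ∑ c, A (g c) c = ∑ c, A (ψ c) c + ∑ c, A (φ c) c := by
    simp only [← Fintype.sum_subtype_add_sum_subtype p fun c => A (g c) c,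
      ← Fintype.sum_subtype_add_sum_subtype p fun c => A (φ c) c, ← add_assoc,
      ← Finset.sum_add_distrib, hswap]
    exact congrArg _ (Finset.sum_congr rfl fun c _ => by rw [hg_out c c.2])
  exact ⟨χ, by linarith⟩

theorem mpPerm_deleteCol_eq_on_oas_rows_general (n d : ℕ)
    (A : Matrix (Fin n) (Fin d) ℝ) (φ : Fin d ↪ Fin n) (hφ : φ ∈ oas A) (j : Fin d) :
    mpPerm (A.submatrix (id : Fin n → Fin n) (fun c : {c : Fin d // c ≠ j} => (c : Fin d))) =
      mpPerm (A.submatrix (fun t : Fin d => φ t) (fun c : {c : Fin d // c ≠ j} => (c : Fin d))) := by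
  refine le_antisymm ?_ ?_
  · have : Nonempty ({c : Fin d // c ≠ j} ↪ Fin n) := ⟨(Function.Embedding.subtype _).trans φ⟩
    refine mpPerm_le fun ψ => ?_
    obtain ⟨χ, hχ⟩ := exists_sum_le_sum_comp_of_mem_oas hφ ψ
    exact hχ.trans (sum_le_mpPerm (A.submatrix (fun t => φ t) _) χ)
  · have : Nonempty ({c : Fin d // c ≠ j} ↪ Fin d) := ⟨Function.Embedding.subtype _⟩
    exact mpPerm_le fun χ => sum_le_mpPerm (A.submatrix id _) (χ.trans φ)

/-- If `φ` is an optimal assignment of an `n×d` max-plus matrix `𝒜`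
(`n ≥ d ≥ 2`) and `j` is a column, then the max-plus permanent of `𝒜` with column `j`
deleted equals the max-plus permanent of the submatrix on rows `φ(1),…,φ(d)` with
column `j` deleted. -/
theorem mpPerm_deleteCol_eq_on_oas_rows (n d : ℕ) (hd : 2 ≤ d) (hdn : d ≤ n)
    (A : Matrix (Fin n) (Fin d) ℝ) (φ : Fin d ↪ Fin n) (hφ : φ ∈ oas A) (j : Fin d) :
    mpPerm (A.submatrix (id : Fin n → Fin n) (fun c : {c : Fin d // c ≠ j} => (c : Fin d))) =
      mpPerm (A.submatrix (fun t : Fin d => φ t) (fun c : {c : Fin d // c ≠ j} => (c : Fin d))) :=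
  mpPerm_deleteCol_eq_on_oas_rows_general n d A φ hφ j
end

section
/- Every square real matrix admits a Hungarian scaling: for every M ∈ ℝ^{d×d} there exist a permutation π of {1,…,d} attaining perm(M) and vectors u, v ∈ ℝ^d such that M_{ij} + u_i + v_j ≤ 0 for all i,j ∈ {1,…,d}, with equality M_{π(j)j} + u_{π(j)} + v_j = 0 for all j ∈ {1,…,d}. -/
open scoped BigOperators

/-!
Fix a permutation `π` attaining the max-plus permanent and consider the reduced costs
`w j k = M (π k) k - M (π k) j`. Optimality of `π` says that `∑ q, w (ρ q) q ≥ 0` for every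
permutation `ρ`; applied to the cyclic permutation of a simple cycle, and after cutting closed
walks into simple cycles, every closed walk has nonnegative `w`-cost. Hence the least cost
`v j` of a walk starting at `j` is finite, and it is a shortest-path potential:
`v j ≤ w j k + v k`. With `u i = -M i (π⁻¹ i) - v (π⁻¹ i)` this is the Hungarian scaling.
-/

open Finset

noncomputable def walkCost {ι : Type*} (w : ι → ι → ℝ) : List ι → ℝ
  | a :: b :: l => w a b + walkCost w (b :: l)
  | _ => 0

section WalkCost

variable {ι : Type*} (w : ι → ι → ℝ)

@[simp] lemma walkCost_nil : walkCost w [] = 0 := rfl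

@[simp] lemma walkCost_singleton (a : ι) : walkCost w [a] = 0 := rfl

@[simp] lemma walkCost_cons_cons (a b : ι) (l : List ι) :
    walkCost w (a :: b :: l) = w a b + walkCost w (b :: l) := rfl

lemma walkCost_append_cons (e : ι) (z : List ι) :
    ∀ x : List ι, walkCost w (x ++ e :: z) = walkCost w (x ++ [e]) + walkCost w (e :: z)
  | [] => by simp
  | [a] => by simp
  | a :: b :: x => by
    have ih := walkCost_append_cons e z (b :: x)
    simp only [List.cons_append, walkCost_cons_cons] at ih ⊢
    rw [ih]
    ring

lemma walkCost_append_cons_append_cons (x y z : List ι) (e : ι) :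
    walkCost w (x ++ e :: y ++ e :: z) =
      walkCost w (x ++ e :: z) + walkCost w (e :: y ++ [e]) := by
  rw [walkCost_append_cons, List.append_assoc, List.cons_append,
    walkCost_append_cons w e (y ++ [e]), walkCost_append_cons w e z]
  ring

lemma walkCost_concat (l : List ι) (h : l ≠ []) (b : ι) :
    walkCost w (l ++ [b]) = walkCost w l + w (l.getLast h) b := by
  conv_lhs => rw [← List.dropLast_append_getLast h, List.append_assoc, List.singleton_append,
    walkCost_append_cons, List.dropLast_append_getLast h]
  simp

lemma walkCost_cons_eq_sum_of_isChain (σ : Equiv.Perm ι) :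
    ∀ (a : ι) (t : List ι), (a :: t).IsChain (fun p q => σ p = q) →
      walkCost w (a :: t) = (t.map fun q => w (σ.symm q) q).sum
  | _, [], _ => by simp
  | a, b :: t, h => by
    rw [List.isChain_cons_cons] at h
    rw [walkCost_cons_cons, walkCost_cons_eq_sum_of_isChain σ b t h.2, ← h.1]
    simp

end WalkCost

lemma List.exists_eq_append_cons_append_cons_of_not_nodup {α : Type*} {l : List α}
    (h : ¬ l.Nodup) : ∃ x e y z, l = x ++ e :: y ++ e :: z := by
  obtain ⟨e, he⟩ := not_forall_not.mp (List.nodup_iff_sublist.not.mp h)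
  obtain ⟨x, t, rfl, hex, ht⟩ := List.cons_sublist_iff.mp he
  obtain ⟨x₁, x₂, rfl⟩ := List.append_of_mem hex
  obtain ⟨y₁, y₂, rfl⟩ := List.append_of_mem (List.singleton_sublist.mp ht)
  exact ⟨x₁, e, x₂ ++ y₁, y₂, by simp⟩

lemma List.isChain_getLast_cons_formPerm {α : Type*} [DecidableEq α] {t : List α}
    (ht : t.Nodup) (hne : t ≠ []) :
    (t.getLast hne :: t).IsChain (fun p q => t.formPerm p = q) := by
  obtain ⟨x, xs, rfl⟩ := List.exists_cons_of_ne_nil hne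
  refine List.isChain_cons_cons.2 ⟨List.formPerm_apply_getLast x xs, ?_⟩
  exact List.isChain_iff_getElem.2 fun i hi => List.formPerm_apply_lt_getElem _ ht i hi

section ClosedWalk

variable {ι : Type*} [Fintype ι] [DecidableEq ι] {w : ι → ι → ℝ}

lemma walkCost_getLast_cons_eq_sum_formPerm (hdiag : ∀ k, w k k = 0) {t : List ι}
    (ht : t.Nodup) (hne : t ≠ []) :
    walkCost w (t.getLast hne :: t) = ∑ q, w (t.formPerm.symm q) q := by
  rw [walkCost_cons_eq_sum_of_isChain w _ _ _ (List.isChain_getLast_cons_formPerm ht hne),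
    ← List.sum_toFinset _ ht]
  refine sum_subset (subset_univ _) fun q _ hq => ?_
  rw [(Equiv.symm_apply_eq _).2 (List.formPerm_apply_of_notMem (by simpa using hq)).symm,
    hdiag]

theorem walkCost_nonneg_of_head?_eq_getLast? (hdiag : ∀ k, w k k = 0)
    (hcyc : ∀ ρ : Equiv.Perm ι, 0 ≤ ∑ q, w (ρ q) q) :
    ∀ l : List ι, l.head? = l.getLast? → 0 ≤ walkCost w l
  | [], _ => by simp
  | a :: t, hl => by
    by_cases ht : t.Nodup
    · rcases eq_or_ne t [] with rfl | hne
      · simp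
      obtain rfl : a = t.getLast hne := by
        simpa [List.getLast?_cons, List.getLast?_eq_some_getLast hne] using hl
      rw [walkCost_getLast_cons_eq_sum_formPerm hdiag ht hne]
      exact hcyc _
    · obtain ⟨x, e, y, z, hd⟩ := List.exists_eq_append_cons_append_cons_of_not_nodup ht
      subst hd
      have hloop := walkCost_nonneg_of_head?_eq_getLast? hdiag hcyc (e :: y ++ [e])
        (by simp [List.getLast?_cons])
      have hrest := walkCost_nonneg_of_head?_eq_getLast? hdiag hcyc (a :: x ++ e :: z) (by
        simpa only [List.cons_append, List.head?_cons, List.getLast?_cons, List.getLast?_append,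
          Option.some_or] using hl)
      rw [← List.cons_append, ← List.cons_append, walkCost_append_cons_append_cons]
      linarith
termination_by l => l.length
decreasing_by
  all_goals
    subst_vars
    simp only [List.length_append, List.length_cons, List.length_nil]
    omega

end ClosedWalk

/-- The potential is `v j = ⨅ l, walkCost w (j :: l)`; closing a walk from `j` with one edge
back to `j` bounds its cost below by `-w _ j`. -/
theorem exists_potential_of_walkCost_nonneg {ι : Type*} [Finite ι] (w : ι → ι → ℝ)
    (hclosed : ∀ l : List ι, l.head? = l.getLast? → 0 ≤ walkCost w l) :
    ∃ v : ι → ℝ, ∀ j k, v j ≤ w j k + v k := by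
  obtain ⟨C, hC⟩ := (Set.finite_range (Function.uncurry w)).bddAbove
  have hlow : ∀ j l, -C ≤ walkCost w (j :: l) := fun j l => by
    have hcl := hclosed (j :: l ++ [j]) (by simp [List.getLast?_cons])
    rw [walkCost_concat w (j :: l) (List.cons_ne_nil _ _)] at hcl
    have : w _ j ≤ C := hC ⟨((j :: l).getLast (List.cons_ne_nil _ _), j), rfl⟩
    linarith
  have hbdd : ∀ j, BddBelow (Set.range fun l => walkCost w (j :: l)) := fun j =>
    ⟨-C, by rintro _ ⟨l, rfl⟩; exact hlow j l⟩
  refine ⟨fun j => ⨅ l, walkCost w (j :: l), fun j k => sub_le_iff_le_add'.1 ?_⟩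
  refine le_ciInf fun l => ?_
  have := ciInf_le (hbdd j) (k :: l)
  simp only [walkCost_cons_cons] at this
  linarith

section MaxPlusPermanent

variable {ι : Type*} [Fintype ι] (A : Matrix ι ι ℝ)

lemma sum_perm_le_mpPerm (σ : Equiv.Perm ι) : ∑ j, A (σ j) j ≤ mpPerm A :=
  le_ciSup (f := fun φ : ι ↪ ι => ∑ j, A (φ j) j) (Set.finite_range _).bddAbove
    σ.toEmbedding

lemma exists_perm_sum_eq_mpPerm : ∃ σ : Equiv.Perm ι, ∑ j, A (σ j) j = mpPerm A := by
  have : Nonempty (ι ↪ ι) := ⟨.refl ι⟩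
  obtain ⟨φ, hφ⟩ := exists_eq_ciSup_of_finite (f := fun φ : ι ↪ ι => ∑ j, A (φ j) j)
  exact ⟨Equiv.ofBijective φ (Finite.injective_iff_bijective.mp φ.injective), hφ⟩

lemma sum_reducedCost_nonneg {π : Equiv.Perm ι} (hπ : ∑ j, A (π j) j = mpPerm A)
    (ρ : Equiv.Perm ι) : 0 ≤ ∑ q, (A (π q) q - A (π q) (ρ q)) := by
  have h := sum_perm_le_mpPerm A (π * ρ⁻¹)
  rw [← Equiv.sum_comp ρ] at h
  simp only [Equiv.Perm.mul_apply, Equiv.Perm.inv_def, Equiv.symm_apply_apply] at h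
  rw [sum_sub_distrib, hπ]
  linarith

end MaxPlusPermanent

/-- Every square real matrix admits a Hungarian scaling: there are a
permutation `π` attaining the max-plus permanent and vectors `u, v` with
`M_{ij} + u_i + v_j ≤ 0` everywhere and equality along the optimal assignment. -/
theorem exists_hungarian_scaling (d : ℕ) (M : Matrix (Fin d) (Fin d) ℝ) :
    ∃ (π : Equiv.Perm (Fin d)) (u v : Fin d → ℝ),
      (∑ j, M (π j) j = mpPerm M) ∧
      (∀ i j, M i j + u i + v j ≤ 0) ∧
      (∀ j, M (π j) j + u (π j) + v j = 0) := by
  obtain ⟨π, hπ⟩ := exists_perm_sum_eq_mpPerm M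
  obtain ⟨v, hv⟩ := exists_potential_of_walkCost_nonneg (fun j k => M (π k) k - M (π k) j)
    (walkCost_nonneg_of_head?_eq_getLast? (fun k => sub_self _) (sum_reducedCost_nonneg M hπ))
  refine ⟨π, fun i => -M i (π.symm i) - v (π.symm i), v, hπ, fun i j => ?_, fun j => ?_⟩
  · have := hv j (π.symm i)
    simp only [Equiv.apply_symm_apply] at this
    linarith
  · simp only [Equiv.symm_apply_apply]
    ring
end

section
/- Let H ∈ ℝ^{d×d} with d ≥ 2 satisfy H_{ij} ≤ 0 for all i,j and H_{ii} = 0 for all i. Then perm(H) = 0, and for all i,j ∈ {1,…,d} the entry of the max-plus inverse satisfies: (H^{⊗−1})_{ij} = perm(H with row j and column i deleted) = the maximum, over all sequences of distinct indices i = v_0, v_1, …, v_m = j in {1,…,d} (m ≥ 0, where for i = j only the trivial sequence is allowed and the empty sum is 0), of ∑_{t=0}^{m−1} H_{v_t v_{t+1}}; i.e. (H^{⊗−1})_{ij} equals the weight of the maximally weighted path from i to j in the weighted digraph on {1,…,d} whose edge i→j has weight H_{ij}. -/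
open scoped BigOperators

open Finset Function

/-! Because `H ≤ 0` has zero diagonal, the identity is an optimal assignment, so `perm H = 0`.
An assignment of the columns `≠ i` to the rows `≠ j` is a permutation `σ` with `σ i = j`.
Following `σ⁻¹` from `i` until it reaches `j = σ i` traces a path of distinct vertices whose
edges all occur in the assignment; the other entries of the assignment are `≤ 0`. Conversely, a
path `i = v₀, …, vₘ = j` closes up to the cycle `vₜ₊₁ ↦ vₜ`, `i ↦ j`, and every column off the
path is assigned to itself, where `H` vanishes. -/

theorem Fintype.sum_le_sum_comp_of_injective {ι κ M : Type*} [Fintype ι] [Fintype κ]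
    [AddCommMonoid M] [Preorder M] [AddLeftMono M] {g : ι → κ} (hg : Injective g)
    {f : κ → M} (hf : ∀ k ∉ Set.range g, f k ≤ 0) : ∑ k, f k ≤ ∑ i, f (g i) := by
  classical
  calc ∑ k, f k ≤ ∑ k ∈ univ.image g, f k :=
        sum_le_sum_of_subset_of_nonpos' (subset_univ _) fun k _ hk => hf k (by simpa using hk)
    _ = ∑ i, f (g i) := sum_image fun a _ b _ h => hg h

section

variable {α : Type*}

def pathWeight (H : Matrix α α ℝ) {m : ℕ} (v : Fin (m + 1) → α) : ℝ :=
  ∑ t : Fin m, H (v t.castSucc) (v t.succ)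

def pathWeights (H : Matrix α α ℝ) (i j : α) : Set ℝ :=
  {w | ∃ (m : ℕ) (v : Fin (m + 1) → α),
    Injective v ∧ v 0 = i ∧ v (Fin.last m) = j ∧ w = pathWeight H v}

theorem bddAbove_pathWeights {H : Matrix α α ℝ} (hle : ∀ a b, H a b ≤ 0) (i j : α) :
    BddAbove (pathWeights H i j) :=
  ⟨0, by rintro _ ⟨m, v, -, -, -, rfl⟩; exact sum_nonpos fun t _ => hle _ _⟩

def Equiv.Perm.subtypeNeEquiv (σ : Equiv.Perm α) {i j : α} (hσ : σ i = j) :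
    {c // c ≠ i} ≃ {r // r ≠ j} :=
  σ.subtypeEquiv fun _ => (σ.injective.ne_iff' hσ).symm

variable [Fintype α]

theorem mpPerm_eq_zero {H : Matrix α α ℝ} (hle : ∀ a b, H a b ≤ 0) (hdiag : ∀ a, H a a = 0) :
    mpPerm H = 0 :=
  have : Nonempty (α ↪ α) := ⟨.refl α⟩
  le_antisymm (ciSup_le fun _ => sum_nonpos fun _ _ => hle _ _)
    (le_ciSup_of_le (Finite.bddAbove_range _) (Embedding.refl α) (by simp [hdiag]))

variable [DecidableEq α]

theorem exists_perm_extending_embedding_subtype_ne {i j : α}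
    (φ : {c // c ≠ i} ↪ {r // r ≠ j}) : ∃ σ : Equiv.Perm α, σ i = j ∧ ∀ c, (φ c : α) = σ c := by
  have hcard : Fintype.card {c // c ≠ i} = Fintype.card {r // r ≠ j} := by
    simp [Fintype.card_subtype_compl]
  let e := Equiv.ofBijective φ
    ((Fintype.bijective_iff_injective_and_card φ).2 ⟨φ.injective, hcard⟩)
  exact ⟨(Equiv.optionSubtypeNe i).symm.trans (e.optionCongr.trans (Equiv.optionSubtypeNe j)),
    by simp, fun c => by simp [Equiv.optionSubtypeNe_symm_of_ne c.2, e]⟩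

theorem sum_le_mpPerm_submatrix_subtype_ne (H : Matrix α α ℝ) {σ : Equiv.Perm α} {i j : α}
    (hσ : σ i = j) :
    ∑ c : {c // c ≠ i}, H (σ c) c ≤
      mpPerm (H.submatrix (Subtype.val : {r // r ≠ j} → α) (Subtype.val : {c // c ≠ i} → α)) :=
  le_ciSup (f := fun φ : {c // c ≠ i} ↪ {r // r ≠ j} => ∑ c, H (φ c) c)
    (Finite.bddAbove_range _) (σ.subtypeNeEquiv hσ).toEmbedding

theorem exists_mem_pathWeights_ge_of_perm {H : Matrix α α ℝ} (hle : ∀ a b, H a b ≤ 0)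
    {σ : Equiv.Perm α} {i j : α} (hσ : σ i = j) :
    ∃ w ∈ pathWeights H i j, ∑ c : {c // c ≠ i}, H (σ c) c ≤ w := by
  set τ := σ.symm
  obtain ⟨m, hm⟩ : ∃ m, minimalPeriod τ i = m + 1 :=
    Nat.exists_eq_succ_of_ne_zero
      (minimalPeriod_pos_of_mem_periodicPts (τ.injective.mem_periodicPts i)).ne'
  let v : Fin (m + 1) → α := fun t => τ^[t] i
  have hv : Injective v := fun s t h =>
    Fin.ext (iterate_injOn_Iio_minimalPeriod (by rw [Set.mem_Iio, hm]; exact s.isLt)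
      (by rw [Set.mem_Iio, hm]; exact t.isLt) h)
  have hlast : v (Fin.last m) = j := by
    have hper : τ^[m + 1] i = i := hm ▸ iterate_minimalPeriod
    rw [← hσ, ← σ.symm_apply_eq, ← hper, iterate_succ_apply']
    rfl
  have hstep : ∀ t : Fin m, σ (v t.succ) = v t.castSucc := fun t => by
    simp [v, iterate_succ_apply', τ]
  refine ⟨pathWeight H v, ⟨m, v, hv, rfl, hlast, rfl⟩, ?_⟩
  calc ∑ c : {c // c ≠ i}, H (σ c) c
      ≤ ∑ t : Fin m, H (σ (v t.succ)) (v t.succ) :=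
        Fintype.sum_le_sum_comp_of_injective
          (g := fun t => (⟨v t.succ, fun h => Fin.succ_ne_zero t (hv h)⟩ : {c // c ≠ i}))
          (fun s t h => Fin.succ_injective _ (hv (congrArg Subtype.val h))) fun _ _ => hle _ _
    _ = pathWeight H v := by simp only [hstep, pathWeight]

theorem exists_perm_of_injective_path {H : Matrix α α ℝ} (hdiag : ∀ a, H a a = 0) {m : ℕ}
    {v : Fin (m + 1) → α} (hv : Injective v) :
    ∃ σ : Equiv.Perm α, σ (v 0) = v (Fin.last m) ∧
      ∑ c : {c // c ≠ v 0}, H (σ c) c = pathWeight H v := by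
  let σ := Equiv.Perm.viaFintypeEmbedding (finRotate (m + 1)).symm ⟨v, hv⟩
  have hσ : ∀ t, σ (v t) = v ((finRotate (m + 1)).symm t) :=
    Equiv.Perm.viaFintypeEmbedding_apply_image _ ⟨v, hv⟩
  have hσ_zero : σ (v 0) = v (Fin.last m) :=
    (hσ 0).trans (congrArg v ((finRotate _).symm_apply_eq.2 finRotate_last.symm))
  have hσ_fix : ∀ c ∉ Set.range v, σ c = c := fun _ hc =>
    Equiv.Perm.viaFintypeEmbedding_apply_notMem_range (f := ⟨v, hv⟩) _ hc
  have hσ_succ : ∀ t : Fin m, σ (v t.succ) = v t.castSucc := fun t =>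
    (hσ _).trans <| congrArg v <| Fin.ext <| by
      rw [coe_finRotate_symm_of_ne_zero (Fin.succ_ne_zero t)]; simp
  refine ⟨σ, hσ_zero, (Fintype.sum_of_injective
    (fun t => (⟨v t.succ, fun h => Fin.succ_ne_zero t (hv h)⟩ : {c // c ≠ v 0}))
    (fun s t h => Fin.succ_injective _ (hv (congrArg Subtype.val h))) _ _ ?_ ?_).symm⟩
  · rintro ⟨c, hc⟩ hcr
    have hcv : c ∉ Set.range v := by
      rintro ⟨t, rfl⟩
      obtain ⟨s, rfl⟩ := (Fin.eq_zero_or_eq_succ t).resolve_left (by rintro rfl; exact hc rfl)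
      exact hcr ⟨s, rfl⟩
    simp [hσ_fix c hcv, hdiag]
  · intro t
    simp [hσ_succ]

theorem mpPerm_submatrix_subtype_ne_eq_sSup_pathWeights {H : Matrix α α ℝ}
    (hle : ∀ a b, H a b ≤ 0) (hdiag : ∀ a, H a a = 0) (i j : α) :
    mpPerm (H.submatrix (Subtype.val : {r // r ≠ j} → α) (Subtype.val : {c // c ≠ i} → α)) =
      sSup (pathWeights H i j) := by
  have hswap : Equiv.swap i j i = j := Equiv.swap_apply_left i j
  obtain ⟨w₀, hw₀, -⟩ := exists_mem_pathWeights_ge_of_perm hle hswap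
  apply le_antisymm
  · have : Nonempty ({c // c ≠ i} ↪ {r // r ≠ j}) := ⟨(Equiv.swap i j).subtypeNeEquiv hswap⟩
    refine ciSup_le fun φ => ?_
    obtain ⟨σ, hσ, hφσ⟩ := exists_perm_extending_embedding_subtype_ne φ
    obtain ⟨w, hw, hsum⟩ := exists_mem_pathWeights_ge_of_perm hle hσ
    simp only [Matrix.submatrix_apply, hφσ]
    exact hsum.trans (le_csSup (bddAbove_pathWeights hle i j) hw)
  · refine csSup_le ⟨w₀, hw₀⟩ ?_
    rintro _ ⟨m, v, hv, rfl, rfl, rfl⟩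
    obtain ⟨σ, hσ, hsum⟩ := exists_perm_of_injective_path hdiag hv
    exact hsum ▸ sum_le_mpPerm_submatrix_subtype_ne H hσ

end

theorem mpInv_eq_max_path_weight_general (d : ℕ) (H : Matrix (Fin d) (Fin d) ℝ)
    (hle : ∀ i j, H i j ≤ 0) (hdiag : ∀ i, H i i = 0) :
    mpPerm H = 0 ∧
      ∀ i j : Fin d,
        mpInv H i j = mpPermDel H j i ∧
        mpInv H i j = sSup {w : ℝ | ∃ (m : ℕ) (v : Fin (m + 1) → Fin d),
          Function.Injective v ∧ v 0 = i ∧ v (Fin.last m) = j ∧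
          w = ∑ t : Fin m, H (v t.castSucc) (v t.succ)} := by
  have hperm : mpPerm H = 0 := mpPerm_eq_zero hle hdiag
  have hdel : ∀ i j, mpInv H i j = mpPermDel H j i := fun i j => by simp [mpInv, hperm]
  exact ⟨hperm, fun i j => ⟨hdel i j,
    (hdel i j).trans (mpPerm_submatrix_subtype_ne_eq_sSup_pathWeights hle hdiag i j)⟩⟩

/-- If `H` is a `d×d` real matrix (`d ≥ 2`) with `H_{ij} ≤ 0` and
`H_{ii} = 0`, then `perm(H) = 0` and each entry `(H^{⊗-1})_{ij}` of the max-plus inverse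
equals `perm(H with row j and column i deleted)`, which in turn equals the maximal
weight of a path from `i` to `j` through distinct vertices in the weighted digraph of
`H` (the trivial path of weight `0` when `i = j`). -/
theorem mpInv_eq_max_path_weight (d : ℕ) (hd : 2 ≤ d) (H : Matrix (Fin d) (Fin d) ℝ)
    (hle : ∀ i j, H i j ≤ 0) (hdiag : ∀ i, H i i = 0) :
    mpPerm H = 0 ∧
      ∀ i j : Fin d,
        mpInv H i j = mpPermDel H j i ∧
        mpInv H i j = sSup {w : ℝ | ∃ (m : ℕ) (v : Fin (m + 1) → Fin d),
          Function.Injective v ∧ v 0 = i ∧ v (Fin.last m) = j ∧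
          w = ∑ t : Fin m, H (v t.castSucc) (v t.succ)} :=
  mpInv_eq_max_path_weight_general d H hle hdiag
end
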